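/- arXiv:1707.06404 — 6 statements merged into one kernel-verified Lean document; each statement's English description precedes it below -/
import Mathlib

section
/- Let f : ℝ → ℝ be real analytic with f(0) = 0 and f'(0) = -1, and suppose f ∘ f is not the identity in any neighborhood of 0. If f(f(x)) - x = c·x^m + O(x^{m+1}) near 0 with c ≠ 0, then m is odd. -/
/-!
Write `g = f ∘ f - id`, so that `g x ~ c x ^ m`. The quantity `g (f x)` can be computed in two
ways. Since `f x ~ -x`, it is `~ c (f x) ^ m ~ (-1) ^ m c x ^ m`. On the other hand
`g (f x) = f (f (f x)) - f x` is an increment of `f` between the nearby points `x` and `f (f x)`,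
so strict differentiability gives `g (f x) ~ -(f (f x) - x) = -g x ~ -c x ^ m`.
Hence `(-1) ^ m = -1`.
-/

open Topology Filter Asymptotics

section

variable {𝕜 : Type*} [NontriviallyNormedField 𝕜]

theorem HasStrictDerivAt.tendsto_slope_of_tendsto {f : 𝕜 → 𝕜} {f' a : 𝕜} {α : Type*}
    {l : Filter α} {u v : α → 𝕜} (hf : HasStrictDerivAt f f' a) (hu : Tendsto u l (𝓝 a))
    (hv : Tendsto v l (𝓝 a)) (huv : ∀ᶠ t in l, u t ≠ v t) :
    Tendsto (fun t => slope f (v t) (u t)) l (𝓝 f') := by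
  have hlo := hf.hasStrictFDerivAt.isLittleO.comp_tendsto (hu.prodMk_nhds hv)
  have := hlo.tendsto_div_nhds_zero.add_const f'
  rw [zero_add] at this
  refine this.congr' ?_
  filter_upwards [huv] with t ht
  have : u t - v t ≠ 0 := sub_ne_zero.mpr ht
  simp only [Function.comp_apply, ContinuousLinearMap.toSpanSingleton_apply, smul_eq_mul,
    slope_def_field]
  field_simp
  ring

theorem tendsto_div_pow_nhdsNE_of_isBigO {g : 𝕜 → 𝕜} {c : 𝕜} {m : ℕ}
    (hg : (fun x => g x - c * x ^ m) =O[𝓝 0] fun x => x ^ (m + 1)) :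
    Tendsto (fun x => g x / x ^ m) (𝓝[≠] 0) (𝓝 c) := by
  have hlo := (hg.trans_isLittleO (isLittleO_pow_pow m.lt_succ_self)).tendsto_div_nhds_zero
  have := (hlo.mono_left (nhdsWithin_le_nhds (s := {0}ᶜ))).add_const c
  rw [zero_add] at this
  refine this.congr' ?_
  filter_upwards [self_mem_nhdsWithin] with x hx
  have : x ^ m ≠ 0 := pow_ne_zero m hx
  field_simp
  ring

theorem neg_one_pow_eq_neg_one_of_tendsto_comp_self_sub_div_pow {f : 𝕜 → 𝕜} {c : 𝕜}
    {m : ℕ} (hf : HasStrictDerivAt f (-1) 0) (h0 : f 0 = 0) (hc : c ≠ 0)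
    (hlim : Tendsto (fun x => (f (f x) - x) / x ^ m) (𝓝[≠] 0) (𝓝 c)) :
    (-1 : 𝕜) ^ m = -1 := by
  set g : 𝕜 → 𝕜 := fun x => f (f x) - x
  have hf_ne : Tendsto f (𝓝[≠] 0) (𝓝[≠] 0) := by
    simpa [h0] using hf.hasDerivAt.tendsto_nhdsNE (neg_ne_zero.mpr one_ne_zero)
  have hf_div : Tendsto (fun x => f x / x) (𝓝[≠] 0) (𝓝 (-1)) := by
    simpa [slope_fun_def_field, h0] using hf.hasDerivAt.tendsto_slope
  have hff : Tendsto (fun x => f (f x)) (𝓝[≠] 0) (𝓝 0) := by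
    have hcont := hf.hasDerivAt.continuousAt
    have := (hcont.comp_of_eq hcont h0).tendsto
    simpa [Function.comp_def, h0] using this.mono_left nhdsWithin_le_nhds
  have hg_ne : ∀ᶠ x in 𝓝[≠] 0, g x ≠ 0 :=
    (hlim.eventually_ne hc).mono fun x hx hgx => hx (by simp [g, hgx])
  have h_via_pow : Tendsto (fun x => g (f x) / x ^ m) (𝓝[≠] 0) (𝓝 (c * (-1) ^ m)) := by
    refine ((hlim.comp hf_ne).mul (hf_div.pow m)).congr' ?_
    filter_upwards [hf_ne self_mem_nhdsWithin, self_mem_nhdsWithin] with x hfx hx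
    have hfx : f x ≠ 0 := hfx
    have hx : x ≠ 0 := hx
    simp only [Function.comp_apply, div_pow, g]
    field_simp
  have h_via_slope : Tendsto (fun x => g (f x) / x ^ m) (𝓝[≠] 0) (𝓝 (-1 * c)) := by
    refine ((hf.tendsto_slope_of_tendsto hff (tendsto_id.mono_left nhdsWithin_le_nhds)
      (hg_ne.mono fun x hx => sub_ne_zero.mp hx)).mul hlim).congr' ?_
    filter_upwards [hg_ne] with x hx
    simp only [slope_def_field, id, g] at hx ⊢
    field_simp
  have := tendsto_nhds_unique h_via_pow h_via_slope
  exact mul_left_cancel₀ hc (this.trans (by ring))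

end

theorem stmt1_general (f : ℝ → ℝ) (hf : AnalyticAt ℝ f 0) (h0 : f 0 = 0)
    (h1 : deriv f 0 = -1)
    (m : ℕ) (c : ℝ) (hc : c ≠ 0)
    (hexp : (fun x => f (f x) - x - c * x ^ m) =O[𝓝 (0 : ℝ)] fun x => x ^ (m + 1)) :
    Odd m := by
  have hstrict : HasStrictDerivAt f (-1) 0 := h1 ▸ hf.hasStrictDerivAt
  rw [← neg_one_pow_eq_neg_one_iff_odd (by norm_num : (-1 : ℝ) ≠ 1)]
  exact neg_one_pow_eq_neg_one_of_tendsto_comp_self_sub_div_pow hstrict h0 hc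
    (tendsto_div_pow_nhdsNE_of_isBigO hexp)

theorem stmt1 (f : ℝ → ℝ) (hf : AnalyticAt ℝ f 0) (h0 : f 0 = 0)
    (h1 : deriv f 0 = -1)
    (hni : ¬ ∀ᶠ x in 𝓝 (0 : ℝ), f (f x) = x)
    (m : ℕ) (hm : 3 ≤ m) (c : ℝ) (hc : c ≠ 0)
    (hexp : (fun x => f (f x) - x - c * x ^ m) =O[𝓝 (0 : ℝ)] fun x => x ^ (m + 1)) :
    Odd m :=
  stmt1_general f hf h0 h1 m c hc hexp
end

section
/- Let f : ℝ → ℝ be real analytic with f(0) = 0 and f'(0) = -1, and suppose f(f(x)) - x = c·x^{2m+1} + O(x^{2m+2}) near 0 with c < 0. Then the origin is a locally asymptotically stable fixed point of f. -/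
open Topology Filter Asymptotics

/-! Put `g = f ∘ f`. Near `0`, `g y = y (1 + c y^(2m)) + O(y^(2m+2))` with `0 ≤ 1 + c y^(2m)`,
because `2m` is even and positive; absorbing the error into half of `c y^(2m+1)` gives
`|g y| ≤ |y| - (|c|/2) |y|^(2m+1)`. Hence `|g^[k] x|` decreases to a limit `L` with
`L ≤ L - (|c|/2) L^(2m+1)`, i.e. `L = 0`. The odd iterates `f (g^[k] x)` are controlled by
continuity of `f` at its fixed point `0`. -/

lemma tendsto_zero_of_le_sub_mul_pow {a : ℕ → ℝ} {κ : ℝ} {p : ℕ} (hκ : 0 < κ)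
    (ha : ∀ n, 0 ≤ a n) (hstep : ∀ n, a (n + 1) ≤ a n - κ * a n ^ p) :
    Tendsto a atTop (𝓝 0) := by
  have hanti : Antitone a := antitone_nat_of_succ_le fun n =>
    (hstep n).trans (sub_le_self _ (mul_nonneg hκ.le (pow_nonneg (ha n) p)))
  have hL := tendsto_atTop_ciInf hanti ⟨0, Set.forall_mem_range.2 ha⟩
  set L := ⨅ n, a n
  have hL0 : 0 ≤ L := ge_of_tendsto' hL ha
  have hLstep : L ≤ L - κ * L ^ p :=
    le_of_tendsto_of_tendsto' (hL.comp (tendsto_add_atTop_nat 1))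
      (hL.sub ((hL.pow p).const_mul κ)) hstep
  have hLp : L ^ p = 0 := by nlinarith [pow_nonneg hL0 p]
  rwa [eq_zero_of_pow_eq_zero hLp] at hL

section NormDecrease

variable {E : Type*} [SeminormedAddGroup E] {g : E → E} {δ κ : ℝ} {p : ℕ}

lemma norm_iterate_le_of_norm_le_sub (hκ : 0 ≤ κ)
    (hg : ∀ y, ‖y‖ < δ → ‖g y‖ ≤ ‖y‖ - κ * ‖y‖ ^ p) {x : E} (hx : ‖x‖ < δ) (n : ℕ) :
    ‖g^[n] x‖ ≤ ‖x‖ := by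
  induction n with
  | zero => rfl
  | succ n ih =>
    rw [Function.iterate_succ_apply']
    calc ‖g (g^[n] x)‖ ≤ ‖g^[n] x‖ - κ * ‖g^[n] x‖ ^ p := hg _ (ih.trans_lt hx)
      _ ≤ ‖x‖ := (sub_le_self _ (by positivity)).trans ih

lemma tendsto_iterate_of_norm_le_sub (hκ : 0 < κ)
    (hg : ∀ y, ‖y‖ < δ → ‖g y‖ ≤ ‖y‖ - κ * ‖y‖ ^ p) {x : E} (hx : ‖x‖ < δ) :
    Tendsto (fun n => g^[n] x) atTop (𝓝 0) := by
  rw [tendsto_zero_iff_norm_tendsto_zero]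
  refine tendsto_zero_of_le_sub_mul_pow (p := p) hκ (fun n => norm_nonneg _) fun n => ?_
  rw [Function.iterate_succ_apply']
  exact hg _ ((norm_iterate_le_of_norm_le_sub hκ.le hg hx n).trans_lt hx)

end NormDecrease

lemma eventually_abs_le_sub_of_isBigO {g : ℝ → ℝ} {m : ℕ} (hm : 1 ≤ m) {c : ℝ} (hc : c < 0)
    (hg : (fun x => g x - x - c * x ^ (2 * m + 1)) =O[𝓝 0] fun x => x ^ (2 * m + 2)) :
    ∀ᶠ y in 𝓝 0, |g y| ≤ |y| - (-c / 2) * |y| ^ (2 * m + 1) := by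
  obtain ⟨K, hK⟩ := hg.bound
  have hpow : ∀ᶠ y in 𝓝 (0 : ℝ), -c * |y| ^ (2 * m) < 1 :=
    ((by fun_prop : Continuous fun y : ℝ => -c * |y| ^ (2 * m)).tendsto' 0 0
      (by simp; omega)).eventually_lt_const one_pos
  have hlin : ∀ᶠ y in 𝓝 (0 : ℝ), K * |y| < -c / 2 :=
    ((by fun_prop : Continuous fun y : ℝ => K * |y|).tendsto' 0 0
      (by simp)).eventually_lt_const (by linarith)
  filter_upwards [hK, hpow, hlin] with y hy hpow hlin
  simp only [Real.norm_eq_abs, abs_pow] at hy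
  have hmain : |y + c * y ^ (2 * m + 1)| = |y| + c * |y| ^ (2 * m + 1) := by
    have hfactor : 0 ≤ 1 + c * |y| ^ (2 * m) := by linarith
    rw [show y + c * y ^ (2 * m + 1) = y * (1 + c * y ^ (2 * m)) by ring, abs_mul,
      ← (even_two_mul m).pow_abs y, abs_of_nonneg hfactor]
    ring
  calc |g y|
      = |(y + c * y ^ (2 * m + 1)) + (g y - y - c * y ^ (2 * m + 1))| := by congr 1; ring
    _ ≤ |y + c * y ^ (2 * m + 1)| + |g y - y - c * y ^ (2 * m + 1)| := abs_add_le _ _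
    _ ≤ |y| + c * |y| ^ (2 * m + 1) + (K * |y|) * |y| ^ (2 * m + 1) := by
      rw [hmain, mul_assoc, ← pow_succ']; linarith
    _ ≤ |y| - (-c / 2) * |y| ^ (2 * m + 1) := by
      nlinarith [pow_nonneg (abs_nonneg y) (2 * m + 1)]

lemma iterate_mem_of_iterate_two_mem {X : Type*} {f : X → X} {U : Set X} {x : X} {n : ℕ}
    (h : (f^[2])^[n / 2] x ∈ U ∩ f ⁻¹' U) : f^[n] x ∈ U := by
  rw [← Nat.mod_add_div n 2, Function.iterate_add_apply, Function.iterate_mul]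
  rcases Nat.mod_two_eq_zero_or_one n with h2 | h2 <;> rw [h2]
  exacts [h.1, h.2]

lemma tendsto_iterate_of_tendsto_iterate_two {X : Type*} [TopologicalSpace X] {f : X → X}
    {a x : X} (hf : Tendsto f (𝓝 a) (𝓝 a)) (h : Tendsto (fun k => (f^[2])^[k] x) atTop (𝓝 a)) :
    Tendsto (fun n => f^[n] x) atTop (𝓝 a) := by
  refine tendsto_iff_forall_eventually_mem.2 fun U hU => ?_
  obtain ⟨N, hN⟩ := eventually_atTop.1 (h (inter_mem hU (hf hU)))
  filter_upwards [eventually_ge_atTop (2 * N)] with n hn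
  exact iterate_mem_of_iterate_two_mem (hN (n / 2) (by omega))

theorem stmt2_general (f : ℝ → ℝ) (hf : AnalyticAt ℝ f 0) (h0 : f 0 = 0)
    (m : ℕ) (hm : 1 ≤ m) (c : ℝ) (hc : c < 0)
    (hexp : (fun x => f (f x) - x - c * x ^ (2 * m + 1)) =O[𝓝 (0 : ℝ)]
      fun x => x ^ (2 * m + 2)) :
    (∀ ε > 0, ∃ δ > 0, ∀ x : ℝ, |x| < δ → ∀ n : ℕ, |f^[n] x| < ε) ∧
    (∃ δ > 0, ∀ x : ℝ, |x| < δ →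
      Filter.Tendsto (fun n => f^[n] x) Filter.atTop (𝓝 (0 : ℝ))) := by
  obtain ⟨δ, hδ, hstep⟩ :=
    Metric.eventually_nhds_iff.1 (eventually_abs_le_sub_of_isBigO (g := f^[2]) hm hc hexp)
  replace hstep : ∀ y : ℝ, ‖y‖ < δ → ‖f^[2] y‖ ≤ ‖y‖ - (-c / 2) * ‖y‖ ^ (2 * m + 1) :=
    fun y hy => hstep (by rwa [Real.dist_0_eq_abs])
  have hκ : 0 < -c / 2 := by linarith
  have hcont : Tendsto f (𝓝 0) (𝓝 0) := by
    simpa only [h0] using hf.continuousAt.tendsto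
  refine ⟨fun ε hε => ?_, ⟨δ, hδ, fun x hx => tendsto_iterate_of_tendsto_iterate_two hcont
    (tendsto_iterate_of_norm_le_sub hκ hstep hx)⟩⟩
  obtain ⟨ρ, hρ, hρU⟩ := Metric.mem_nhds_iff.1
    (inter_mem (Metric.ball_mem_nhds 0 hε) (hcont (Metric.ball_mem_nhds 0 hε)))
  refine ⟨min δ ρ, lt_min hδ hρ, fun x hx n => ?_⟩
  have hxρ : (f^[2])^[n / 2] x ∈ Metric.ball 0 ρ := mem_ball_zero_iff.2
    ((norm_iterate_le_of_norm_le_sub hκ.le hstep (hx.trans_le (min_le_left _ _)) _).trans_lt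
      (hx.trans_le (min_le_right _ _)))
  simpa using iterate_mem_of_iterate_two_mem (hρU hxρ)

theorem stmt2 (f : ℝ → ℝ) (hf : AnalyticAt ℝ f 0) (h0 : f 0 = 0)
    (h1 : deriv f 0 = -1) (m : ℕ) (hm : 1 ≤ m) (c : ℝ) (hc : c < 0)
    (hexp : (fun x => f (f x) - x - c * x ^ (2 * m + 1)) =O[𝓝 (0 : ℝ)]
      fun x => x ^ (2 * m + 2)) :
    (∀ ε > 0, ∃ δ > 0, ∀ x : ℝ, |x| < δ → ∀ n : ℕ, |f^[n] x| < ε) ∧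
    (∃ δ > 0, ∀ x : ℝ, |x| < δ →
      Filter.Tendsto (fun n => f^[n] x) Filter.atTop (𝓝 (0 : ℝ))) :=
  stmt2_general f hf h0 m hm c hc hexp
end

section
/- Let f_a(x) = -x + Σ_{j≥2} a_j x^j be an analytic map and write f_a(f_a(x)) = x + Σ_{j≥3} W_j(a₂,...,a_j) x^j. Then each W_j is a polynomial in (a₂,...,a_j) which is quasi-homogeneous of quasi-degree j-1 with weights (1,2,...,j-1); that is, W_j(λa₂, λ²a₃, ..., λ^{j-1}a_j) = λ^{j-1} W_j(a₂,...,a_j) for all λ ∈ ℝ. -/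
/-!
The `n`-th coefficient of `q ∘ p` is `∑ q_k ∏ᵢ p_{bᵢ}` over compositions `n = b₁ + ⋯ + b_k`.
Giving the coefficient of `xᵐ` the weight `m - 1`, each such term has weight
`(k - 1) + ∑ᵢ (bᵢ - 1) = n - 1`; so rescaling the coefficients of `f` by `l ^ (m - 1)` rescales the
`n`-th coefficient of `f ∘ f` by `l ^ (n - 1)`.
-/

theorem Composition.sum_blocksFun_sub_one {n : ℕ} (c : Composition n) :
    ∑ i, (c.blocksFun i - 1) = n - c.length := by
  rw [Finset.sum_tsub_distrib _ fun i _ => c.one_le_blocksFun i, c.sum_blocksFun]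
  simp

namespace FormalMultilinearSeries

variable {𝕜 : Type*} [NontriviallyNormedField 𝕜]

theorem coeff_comp (q p : FormalMultilinearSeries 𝕜 𝕜 𝕜) (n : ℕ) :
    (q.comp p).coeff n =
      ∑ c : Composition n, q.coeff c.length * ∏ i, p.coeff (c.blocksFun i) := by
  rw [coeff, FormalMultilinearSeries.comp, _root_.sum_apply]
  refine Finset.sum_congr rfl fun c _ => ?_
  rw [compAlongComposition_apply, apply_eq_prod_smul_coeff, smul_eq_mul, mul_comm]
  rfl

theorem coeff_comp_of_coeff_eq_pow_mul {q q' p p' : FormalMultilinearSeries 𝕜 𝕜 𝕜} {l : 𝕜}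
    (hq : ∀ n, q'.coeff n = l ^ (n - 1) * q.coeff n)
    (hp : ∀ n, p'.coeff n = l ^ (n - 1) * p.coeff n) (n : ℕ) :
    (q'.comp p').coeff n = l ^ (n - 1) * (q.comp p).coeff n := by
  rw [coeff_comp, coeff_comp, Finset.mul_sum]
  refine Finset.sum_congr rfl fun c _ => ?_
  have hexp : n - 1 = (c.length - 1) + (n - c.length) := by
    have := c.length_le
    have : 0 < n → 0 < c.length := c.length_pos_of_pos
    omega
  simp only [hq, hp, Finset.prod_mul_distrib, Finset.prod_pow_eq_pow_sum,
    c.sum_blocksFun_sub_one, hexp, pow_add]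
  ring

end FormalMultilinearSeries

theorem HasFPowerSeriesAt.coeff_eq_iteratedDeriv_div {𝕜 : Type*} [NontriviallyNormedField 𝕜]
    [CompleteSpace 𝕜] [CharZero 𝕜] {f : 𝕜 → 𝕜} {p : FormalMultilinearSeries 𝕜 𝕜 𝕜} {x : 𝕜}
    (h : HasFPowerSeriesAt f p x) (n : ℕ) :
    p.coeff n = iteratedDeriv n f x / n.factorial := by
  rw [h.eq_formalMultilinearSeries h.analyticAt.hasFPowerSeriesAt,
    FormalMultilinearSeries.coeff_ofScalars]

theorem stmt3_general (a : ℕ → ℝ) (l : ℝ) (f g : ℝ → ℝ)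
    (hf : AnalyticAt ℝ f 0) (hg : AnalyticAt ℝ g 0)
    (hf0 : f 0 = 0) (hg0 : g 0 = 0)
    (hf1 : deriv f 0 = -1) (hg1 : deriv g 0 = -1)
    (hfa : ∀ j, 2 ≤ j → iteratedDeriv j f 0 / (j.factorial : ℝ) = a j)
    (hga : ∀ j, 2 ≤ j → iteratedDeriv j g 0 / (j.factorial : ℝ) = l ^ (j - 1) * a j)
    (j : ℕ) :
    iteratedDeriv j (g ∘ g) 0 / (j.factorial : ℝ) =
      l ^ (j - 1) * (iteratedDeriv j (f ∘ f) 0 / (j.factorial : ℝ)) := by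
  obtain ⟨p, hp⟩ := hf
  obtain ⟨q, hq⟩ := hg
  have hqp : ∀ n, q.coeff n = l ^ (n - 1) * p.coeff n := by
    intro n
    rw [hp.coeff_eq_iteratedDeriv_div, hq.coeff_eq_iteratedDeriv_div]
    match n with
    | 0 => simp [hf0, hg0]
    | 1 => simp [hf1, hg1]
    | n + 2 => rw [hfa _ (by omega), hga _ (by omega)]
  have hpp : HasFPowerSeriesAt (f ∘ f) (p.comp p) 0 := (hf0 ▸ hp).comp hp
  have hqq : HasFPowerSeriesAt (g ∘ g) (q.comp q) 0 := (hg0 ▸ hq).comp hq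
  rw [← hpp.coeff_eq_iteratedDeriv_div, ← hqq.coeff_eq_iteratedDeriv_div]
  exact FormalMultilinearSeries.coeff_comp_of_coeff_eq_pow_mul hqp hqp j

theorem stmt3 (a : ℕ → ℝ) (l : ℝ) (f g : ℝ → ℝ)
    (hf : AnalyticAt ℝ f 0) (hg : AnalyticAt ℝ g 0)
    (hf0 : f 0 = 0) (hg0 : g 0 = 0)
    (hf1 : deriv f 0 = -1) (hg1 : deriv g 0 = -1)
    (hfa : ∀ j, 2 ≤ j → iteratedDeriv j f 0 / (j.factorial : ℝ) = a j)
    (hga : ∀ j, 2 ≤ j → iteratedDeriv j g 0 / (j.factorial : ℝ) = l ^ (j - 1) * a j)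
    (j : ℕ) (hj : 3 ≤ j) :
    iteratedDeriv j (g ∘ g) 0 / (j.factorial : ℝ) =
      l ^ (j - 1) * (iteratedDeriv j (f ∘ f) 0 / (j.factorial : ℝ)) :=
  stmt3_general a l f g hf hg hf0 hg0 hf1 hg1 hfa hga j
end

section
/- For n ≥ 1 and f(x) = -x + x^{2n}, one has f(f(x)) = x - 2n·x^{4n-1} + O(x^{4n}) near 0. That is, the coefficients of x^j in f∘f vanish for 2 ≤ j ≤ 4n-2 and the coefficient of x^{4n-1} equals -2n. -/
/-!
Write `f = p.eval` with `p = X ^ (2n) - X`, so that `f ∘ f = (p.comp p).eval` and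
`p.comp p = p ^ (2n) - p`. Since `p = -X (1 - X ^ (2n-1))` and `2n` is even,
`p ^ (2n) = X ^ (2n) (1 - X ^ (2n-1)) ^ (2n) ≡ X ^ (2n) - 2n X ^ (4n-1)` modulo `X ^ (6n-2)`,
hence `p.comp p ≡ X - 2n X ^ (4n-1)` modulo `X ^ (6n-2)`, and `4n - 1 < 6n - 2` once `n ≥ 1`.
The `j`-th derivative at `0` of a polynomial function is `j!` times its `j`-th coefficient.
-/

open Polynomial

namespace Polynomial

section IteratedDeriv

variable {𝕜 : Type*} [NontriviallyNormedField 𝕜]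

theorem iteratedDeriv_eval (p : 𝕜[X]) (j : ℕ) :
    iteratedDeriv j (fun x => p.eval x) = fun x => (derivative^[j] p).eval x := by
  induction j generalizing p with
  | zero => rfl
  | succ j ih =>
    rw [iteratedDeriv_succ', Function.iterate_succ_apply, ← ih]
    congr
    funext x
    exact Polynomial.deriv p

theorem iteratedDeriv_eval_zero (p : 𝕜[X]) (j : ℕ) :
    iteratedDeriv j (fun x => p.eval x) 0 = j.factorial * p.coeff j := by
  simp only [iteratedDeriv_eval, ← coeff_zero_eq_eval_zero, coeff_iterate_derivative, zero_add,
    Nat.descFactorial_self, nsmul_eq_mul]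

end IteratedDeriv

variable {R : Type*} [CommRing R]

theorem X_pow_dvd_comp_self_sub (n : ℕ) :
    (X : R[X]) ^ (6 * n - 2) ∣
      (X ^ (2 * n) - X : R[X]).comp (X ^ (2 * n) - X) - (X - C (2 * n : R) * X ^ (4 * n - 1)) := by
  rcases n with - | m
  · simp
  have hbinom := sq_dvd_add_pow_sub_sub (-(X : R[X]) ^ (2 * m + 1)) 1 (2 * (m + 1))
  have hfactor : (X ^ (2 * (m + 1)) - X : R[X]) ^ (2 * (m + 1)) =
      X ^ (2 * (m + 1)) * (1 + -X ^ (2 * m + 1)) ^ (2 * (m + 1)) := by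
    rw [← mul_pow, ← (Even.neg_pow ⟨m + 1, by ring⟩ (_ : R[X]))]
    ring
  have hexpand : (X ^ (2 * (m + 1)) - X : R[X]).comp (X ^ (2 * (m + 1)) - X)
      - (X - C (2 * ((m + 1 : ℕ) : R)) * X ^ (4 * (m + 1) - 1)) =
      X ^ (2 * (m + 1)) * ((1 + -X ^ (2 * m + 1)) ^ (2 * (m + 1))
        - 1 ^ (2 * (m + 1) - 1) * -X ^ (2 * m + 1) * ((2 * (m + 1) : ℕ) : R[X])
        - 1 ^ (2 * (m + 1))) := by
    rw [sub_comp, pow_comp, X_comp, hfactor,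
      show 4 * (m + 1) - 1 = 2 * (m + 1) + (2 * m + 1) by omega]
    simp only [map_mul, map_ofNat, map_add, map_one, map_natCast, Nat.cast_mul, Nat.cast_ofNat,
      Nat.cast_add, Nat.cast_one, one_pow]
    ring
  rw [hexpand, show 6 * (m + 1) - 2 = 2 * (m + 1) + (2 * m + 1) * 2 by omega, pow_add]
  exact mul_dvd_mul_left _ (by simpa only [neg_sq, ← pow_mul] using hbinom)

theorem coeff_comp_self_X_pow_sub_X {n j : ℕ} (hj : j < 6 * n - 2) :
    ((X ^ (2 * n) - X : R[X]).comp (X ^ (2 * n) - X)).coeff j =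
      (X - C (2 * n : R) * X ^ (4 * n - 1)).coeff j := by
  have h := X_pow_dvd_iff.mp (X_pow_dvd_comp_self_sub (R := R) n) j hj
  rwa [coeff_sub, sub_eq_zero] at h

end Polynomial

theorem stmt7 (n : ℕ) (hn : 1 ≤ n) (f : ℝ → ℝ)
    (hf : ∀ x, f x = -x + x ^ (2 * n)) :
    (∀ j, 2 ≤ j → j ≤ 4 * n - 2 → iteratedDeriv j (f ∘ f) 0 = 0) ∧
    iteratedDeriv (4 * n - 1) (f ∘ f) 0 / ((4 * n - 1).factorial : ℝ) = -(2 * (n : ℝ)) := by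
  set p : ℝ[X] := X ^ (2 * n) - X
  have hff : f ∘ f = fun x => (p.comp p).eval x := by
    funext x
    simp only [Function.comp_apply, hf, p, eval_comp, eval_sub, eval_pow, eval_X]
    ring
  have hderiv : ∀ j ≤ 4 * n - 1, iteratedDeriv j (f ∘ f) 0 =
      j.factorial * (X - C (2 * n : ℝ) * X ^ (4 * n - 1)).coeff j := fun j hj => by
    rw [hff, iteratedDeriv_eval_zero, coeff_comp_self_X_pow_sub_X (by omega)]
  refine ⟨fun j hj₂ hj₄ => ?_, ?_⟩
  · rw [hderiv j (by omega), coeff_sub, coeff_X, coeff_C_mul_X_pow, if_neg (by omega),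
      if_neg (by omega), sub_zero, mul_zero]
  · rw [hderiv _ le_rfl, coeff_sub, coeff_X, coeff_C_mul_X_pow, if_neg (by omega), if_pos rfl]
    field_simp
    ring
end

section
/- For m ≥ 0 and f(x) = -x + x^{2m+2} - (m+1)x^{4m+3}, one has f(f(x)) = x + ((m+1)(5m+4)(4m+3)/3)·x^{8m+5} + O(x^{8m+6}) near 0. In particular all Taylor coefficients of f∘f - id of order ≤ 8m+4 vanish and the coefficient of x^{8m+5} is positive. -/
open Polynomial Finset

-- binomial truncation lemma
lemma key_pow {A : Type*} [CommRing A] (y s : A) (k : ℕ)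
    (h : ∀ i, 4 ≤ i → y * s ^ i = 0) :
    y * (1 + s) ^ k =
      y * (1 + (k : A) * s + ((k.choose 2 : ℕ) : A) * s ^ 2 + ((k.choose 3 : ℕ) : A) * s ^ 3) := by
  have e1 : (1 + s) ^ k = ∑ i ∈ range (k + 1), ((k.choose i : ℕ) : A) * s ^ i := by
    rw [add_comm (1 : A) s, add_pow]
    exact Finset.sum_congr rfl fun i _ => by rw [one_pow]; ring
  set N := max (k + 1) 4 with hN
  have e2 : (∑ i ∈ range (k + 1), ((k.choose i : ℕ) : A) * s ^ i)
      = ∑ i ∈ range N, ((k.choose i : ℕ) : A) * s ^ i := by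
    apply Finset.sum_subset (Finset.range_subset_range.2 (le_max_left _ _))
    intro i _ hi
    have : k < i := by simpa using hi
    simp [Nat.choose_eq_zero_of_lt this]
  have e3 : y * ∑ i ∈ range N, ((k.choose i : ℕ) : A) * s ^ i
      = ∑ i ∈ range N, ((k.choose i : ℕ) : A) * (y * s ^ i) := by
    rw [Finset.mul_sum]; exact Finset.sum_congr rfl fun i _ => by ring
  have e4 : (∑ i ∈ range N, ((k.choose i : ℕ) : A) * (y * s ^ i))
      = ∑ i ∈ range 4, ((k.choose i : ℕ) : A) * (y * s ^ i) := by
    symm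
    apply Finset.sum_subset (Finset.range_subset_range.2 (le_max_right _ _))
    intro i _ hi
    have h4 : 4 ≤ i := by simpa using hi
    rw [h i h4, mul_zero]
  rw [e1, e2, e3, e4]
  rw [Finset.sum_range_succ, Finset.sum_range_succ, Finset.sum_range_succ, Finset.sum_range_one]
  simp only [Nat.choose_zero_right, Nat.choose_one_right, Nat.cast_one, pow_zero]
  ring

-- iterated derivative of a polynomial at zero
lemma poly_iteratedDeriv (Q : Polynomial ℝ) (n : ℕ) :
    iteratedDeriv n (fun x => Q.eval x) 0 = (n.factorial : ℝ) * Q.coeff n := by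
  have h : ∀ (R : Polynomial ℝ) (n : ℕ),
      iteratedDeriv n (fun x => R.eval x) = fun x => (derivative^[n] R).eval x := by
    intro R n
    induction n with
    | zero => simp
    | succ n ih =>
        rw [iteratedDeriv_succ, ih]
        funext x
        rw [Function.iterate_succ_apply']
        exact Polynomial.deriv _
  rw [h]
  show (derivative^[n] Q).eval 0 = _
  rw [← Polynomial.coeff_zero_eq_eval_zero, Polynomial.coeff_iterate_derivative]
  simp [Nat.descFactorial_self, Nat.factorial]

lemma alg_identity {A : Type*} [CommRing A] (m cN : ℕ)
    (hcN : 3 * cN = (m + 1) * (5 * m + 4) * (4 * m + 3))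
    (hc3 : 3 * (2 * m + 2).choose 3 = (2 * m + 2) * (m * (2 * m + 1)))
    (hc2 : (2 * m + 2).choose 2 = (m + 1) * (2 * m + 1))
    (hc4 : (4 * m + 3).choose 2 = (4 * m + 3) * (2 * m + 1))
    (x p : A) (hx0 : x ^ (8 * m + 6) = 0)
    (hp : p = -x + x ^ (2 * m + 2) - ((m : A) + 1) * x ^ (4 * m + 3)) :
    3 * (-p + p ^ (2 * m + 2) - ((m : A) + 1) * p ^ (4 * m + 3) - x
          - (cN : A) * x ^ (8 * m + 5)) = 0 := by
  have hxe : ∀ e, 8 * m + 6 ≤ e → x ^ e = 0 := by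
    intro e he
    obtain ⟨d, rfl⟩ := Nat.exists_eq_add_of_le he
    rw [pow_add, hx0, zero_mul]
  set y : A := x ^ (2 * m + 1) with hy
  have hxy5 : x * y ^ 5 = 0 := by
    rw [hy, ← pow_mul, ← pow_succ']
    exact hxe _ (by omega)
  have hkill : ∀ j : ℕ, x * y ^ (5 + j) = 0 := by
    intro j
    rw [pow_add, ← mul_assoc, hxy5, zero_mul]
  have hy1 : x ^ (2 * m + 2) = x * y := by
    rw [hy, ← pow_succ']
  have hy2 : x ^ (4 * m + 3) = x * y ^ 2 := by
    rw [hy, ← pow_mul, ← pow_succ']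
    congr 1; omega
  have hy3 : x ^ (8 * m + 5) = x * y ^ 4 := by
    rw [hy, ← pow_mul, ← pow_succ']
    congr 1; omega
  set s : A := -y + ((m : A) + 1) * y ^ 2 with hs
  have hsf : s = y * (-1 + ((m : A) + 1) * y) := by rw [hs]; ring
  have hs4a : ∀ i, 4 ≤ i → x ^ (2 * m + 2) * s ^ i = 0 := by
    intro i hi
    obtain ⟨j, rfl⟩ := Nat.exists_eq_add_of_le hi
    have h1 : x ^ (2 * m + 2) * s ^ (4 + j)
        = (x * y ^ (5 + j)) * (-1 + ((m : A) + 1) * y) ^ (4 + j) := by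
      rw [hy1, hsf, mul_pow]; ring
    rw [h1, hkill, zero_mul]
  have hs4b : ∀ i, 4 ≤ i → x ^ (4 * m + 3) * s ^ i = 0 := by
    intro i hi
    obtain ⟨j, rfl⟩ := Nat.exists_eq_add_of_le hi
    have h1 : x ^ (4 * m + 3) * s ^ (4 + j)
        = (x * y ^ (5 + (1 + j))) * (-1 + ((m : A) + 1) * y) ^ (4 + j) := by
      rw [hy2, hsf, mul_pow]; ring
    rw [h1, hkill, zero_mul]
  have hpfac : p = -(x * (1 + s)) := by
    rw [hp, hy1, hy2, hs]; ring
  have hpe : p ^ (2 * m + 2) = x ^ (2 * m + 2) * (1 + s) ^ (2 * m + 2) := by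
    rw [hpfac, Even.neg_pow ⟨m + 1, by ring⟩, mul_pow]
  have hpo : p ^ (4 * m + 3) = -(x ^ (4 * m + 3) * (1 + s) ^ (4 * m + 3)) := by
    rw [hpfac, Odd.neg_pow ⟨2 * m + 1, by ring⟩, mul_pow]
  have k1 := key_pow (x ^ (2 * m + 2)) s (2 * m + 2) hs4a
  have k2 := key_pow (x ^ (4 * m + 3)) s (4 * m + 3) hs4b
  set C3 : A := (((2 * m + 2).choose 3 : ℕ) : A) with hC3
  set C5 : A := (((4 * m + 3).choose 3 : ℕ) : A) with hC5
  -- cast facts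
  have c3A : 3 * C3 = (2 * (m : A) + 2) * ((m : A) * (2 * (m : A) + 1)) := by
    rw [hC3]
    have := congrArg (Nat.cast : ℕ → A) hc3
    push_cast at this ⊢
    linear_combination this
  have cNA : 3 * (cN : A) = ((m : A) + 1) * (5 * (m : A) + 4) * (4 * (m : A) + 3) := by
    have := congrArg (Nat.cast : ℕ → A) hcN
    push_cast at this ⊢
    linear_combination this
  have c2A : (((2 * m + 2).choose 2 : ℕ) : A) = ((m : A) + 1) * (2 * (m : A) + 1) := by
    rw [hc2]; push_cast; ring
  have c4A : (((4 * m + 3).choose 2 : ℕ) : A) = (4 * (m : A) + 3) * (2 * (m : A) + 1) := by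
    rw [hc4]; push_cast; ring
  rw [hpe, hpo, k1, k2, hpfac, hy1, hy2, hy3, c2A, c4A]
  push_cast
  rw [hs]
  linear_combination
    ((-15:A) + (-3:A)*C5 + (-75:A)*(m:A) + (-3:A)*(m:A)*C5 + (-135:A)*(m:A)^2 + (-105:A)*(m:A)^3 + (-30:A)*(m:A)^4 + (9:A)*y + (9:A)*y*C5 + (51:A)*y*(m:A) + (18:A)*y*(m:A)*C5 + (111:A)*y*(m:A)^2 + (9:A)*y*(m:A)^2*C5 + (117:A)*y*(m:A)^3 + (60:A)*y*(m:A)^4 + (12:A)*y*(m:A)^5 + (-9:A)*y^2*C5 + (2:A)*y^2*(m:A) + (-27:A)*y^2*(m:A)*C5 + (12:A)*y^2*(m:A)^2 + (-27:A)*y^2*(m:A)^2*C5 + (28:A)*y^2*(m:A)^3 + (-9:A)*y^2*(m:A)^3*C5 + (32:A)*y^2*(m:A)^4 + (18:A)*y^2*(m:A)^5 + (4:A)*y^2*(m:A)^6 + (3:A)*y^3*C5 + (12:A)*y^3*(m:A)*C5 + (18:A)*y^3*(m:A)^2*C5 + (12:A)*y^3*(m:A)^3*C5 + (3:A)*y^3*(m:A)^4*C5)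 * hxy5
    + (x * y * (-y + ((m : A) + 1) * y ^ 2) ^ 3) * c3A
    + (-(x * y ^ 4)) * cNA
theorem stmt9 (m : ℕ) (f : ℝ → ℝ)
    (hf : ∀ x, f x = -x + x ^ (2 * m + 2) - ((m : ℝ) + 1) * x ^ (4 * m + 3)) :
    (∀ j ≤ 8 * m + 4, iteratedDeriv j (fun x => f (f x) - x) 0 = 0) ∧
    iteratedDeriv (8 * m + 5) (fun x => f (f x) - x) 0 / ((8 * m + 5).factorial : ℝ) =
      ((m : ℝ) + 1) * (5 * (m : ℝ) + 4) * (4 * (m : ℝ) + 3) / 3 ∧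
    (0 : ℝ) < ((m : ℝ) + 1) * (5 * (m : ℝ) + 4) * (4 * (m : ℝ) + 3) / 3 := by
  -- the coefficient as a natural number
  obtain ⟨cN, hcN⟩ : ∃ cN : ℕ, 3 * cN = (m + 1) * (5 * m + 4) * (4 * m + 3) := by
    obtain ⟨k, r, hr, rfl⟩ : ∃ k r, r < 3 ∧ m = 3 * k + r := ⟨m / 3, m % 3, by omega, by omega⟩
    interval_cases r
    · exact ⟨(3 * k + 1) * (15 * k + 4) * (4 * k + 1), by ring⟩
    · exact ⟨(3 * k + 2) * (5 * k + 3) * (12 * k + 7), by ring⟩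
    · exact ⟨(k + 1) * (15 * k + 14) * (12 * k + 11), by ring⟩
  -- choose identities
  have hc3 : 3 * (2 * m + 2).choose 3 = (2 * m + 2) * (m * (2 * m + 1)) := by
    have h2 := Nat.add_one_mul_choose_eq (2 * m + 1) 2
    have h3 : (2 * m + 1).choose 2 = m * (2 * m + 1) := by
      rw [Nat.choose_two_right, show 2 * m + 1 - 1 = 2 * m from by omega,
        show (2 * m + 1) * (2 * m) = m * (2 * m + 1) * 2 from by ring,
        Nat.mul_div_cancel _ (by norm_num)]
    rw [h3] at h2
    rw [show 2 * m + 1 + 1 = 2 * m + 2 from by omega] at h2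
    rw [show 3 * (2 * m + 2).choose 3 = (2 * m + 2).choose 3 * 3 from by ring, ← h2]
  have hc2 : (2 * m + 2).choose 2 = (m + 1) * (2 * m + 1) := by
    rw [Nat.choose_two_right, show 2 * m + 2 - 1 = 2 * m + 1 from by omega,
      show (2 * m + 2) * (2 * m + 1) = (m + 1) * (2 * m + 1) * 2 from by ring,
      Nat.mul_div_cancel _ (by norm_num)]
  have hc4 : (4 * m + 3).choose 2 = (4 * m + 3) * (2 * m + 1) := by
    rw [Nat.choose_two_right, show 4 * m + 3 - 1 = 4 * m + 2 from by omega,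
      show (4 * m + 3) * (4 * m + 2) = (4 * m + 3) * (2 * m + 1) * 2 from by ring,
      Nat.mul_div_cancel _ (by norm_num)]
  -- the polynomials
  set P : ℝ[X] := -X + X ^ (2 * m + 2) - ((m : ℝ[X]) + 1) * X ^ (4 * m + 3) with hP
  set Q : ℝ[X] := -P + P ^ (2 * m + 2) - ((m : ℝ[X]) + 1) * P ^ (4 * m + 3) - X with hQ
  have hfun : (fun x => f (f x) - x) = fun x => Q.eval x := by
    funext x
    have hx : f x = P.eval x := by simp [hf, hP]
    rw [hf (f x), hx, hQ]
    simp [hP]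
  -- the divisibility
  obtain ⟨E, hE⟩ : ∃ E : ℝ[X], Q = (cN : ℝ[X]) * X ^ (8 * m + 5) + X ^ (8 * m + 6) * E := by
    set I : Ideal ℝ[X] := Ideal.span {(X : ℝ[X]) ^ (8 * m + 6)} with hI
    set π : ℝ[X] →+* (ℝ[X] ⧸ I) := Ideal.Quotient.mk I with hπ
    have hx0 : (π X) ^ (8 * m + 6) = 0 := by
      rw [← map_pow]
      exact Ideal.Quotient.eq_zero_iff_mem.2 (Ideal.subset_span rfl)
    have hpp : π P = -(π X) + (π X) ^ (2 * m + 2) - ((m : ℝ[X] ⧸ I) + 1) * (π X) ^ (4 * m + 3) := by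
      rw [hP]
      simp only [map_sub, map_add, map_neg, map_pow, map_mul, map_natCast, map_one]
    have main := alg_identity (A := ℝ[X] ⧸ I) m cN hcN hc3 hc2 hc4 (π X) (π P) hx0 hpp
    have main2 : π (3 * (Q - (cN : ℝ[X]) * X ^ (8 * m + 5))) = 0 := by
      rw [hQ]
      simp only [map_mul, map_sub, map_add, map_neg, map_pow, map_natCast, map_one, map_ofNat]
      linear_combination main
    obtain ⟨E, hE⟩ : (X : ℝ[X]) ^ (8 * m + 6) ∣ 3 * (Q - (cN : ℝ[X]) * X ^ (8 * m + 5)) := by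
      rw [← Ideal.mem_span_singleton, ← hI, ← Ideal.Quotient.eq_zero_iff_mem]
      exact main2
    refine ⟨C (3⁻¹ : ℝ) * E, ?_⟩
    have h13 : (C (3⁻¹ : ℝ)) * (3 : ℝ[X]) = 1 := by
      rw [show (3 : ℝ[X]) = C (3 : ℝ) from by push_cast [map_ofNat]; rfl, ← C_mul]
      norm_num
    have : Q - (cN : ℝ[X]) * X ^ (8 * m + 5) = X ^ (8 * m + 6) * (C (3⁻¹ : ℝ) * E) := by
      calc Q - (cN : ℝ[X]) * X ^ (8 * m + 5)
          = C (3⁻¹ : ℝ) * (3 * (Q - (cN : ℝ[X]) * X ^ (8 * m + 5))) := by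
            rw [← mul_assoc, h13, one_mul]
        _ = C (3⁻¹ : ℝ) * (X ^ (8 * m + 6) * E) := by rw [hE]
        _ = X ^ (8 * m + 6) * (C (3⁻¹ : ℝ) * E) := by ring
    linear_combination this
  -- coefficients of Q
  have hcoef : ∀ j, j ≤ 8 * m + 5 → Q.coeff j = if j = 8 * m + 5 then (cN : ℝ) else 0 := by
    intro j hj
    have hA : ((cN : ℝ[X]) * X ^ (8 * m + 5)).coeff j
        = if j = 8 * m + 5 then (cN : ℝ) else 0 := by
      rw [show ((cN : ℝ[X])) = C (cN : ℝ) from by norm_num, coeff_C_mul, coeff_X_pow]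
      split <;> simp
    have hB : ((X : ℝ[X]) ^ (8 * m + 6) * E).coeff j = 0 := by
      rw [mul_comm, coeff_mul_X_pow', if_neg (by omega)]
    rw [hE, coeff_add, hA, hB, add_zero]
  have hcNR : (cN : ℝ) = ((m : ℝ) + 1) * (5 * (m : ℝ) + 4) * (4 * (m : ℝ) + 3) / 3 := by
    have := congrArg (Nat.cast : ℕ → ℝ) hcN
    push_cast at this
    field_simp
    linarith
  refine ⟨?_, ?_, by positivity⟩
  · intro j hj
    rw [hfun, poly_iteratedDeriv, hcoef j (by omega), if_neg (by omega), mul_zero]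
  · rw [hfun, poly_iteratedDeriv, hcoef _ le_rfl, if_pos rfl, hcNR]
    have hfac : ((8 * m + 5).factorial : ℝ) ≠ 0 := Nat.cast_ne_zero.2 (Nat.factorial_ne_zero _)
    field_simp
end

section
/- For an analytic map f(x) = -x + Σ_{j≥2} a_j x^j with stability constants W_j defined by f(f(x)) = x + Σ_{j≥3} W_j x^j, the following identity holds: W₄ = -(a₂/2)·W₃, where W₃ = -2a₂² - 2a₃. Equivalently, the coefficient of x⁴ in f(f(x)) is a₂³ + a₂a₃ = a₂(a₂² + a₃). -/
/-! Up to a rescaling, `W₄` is the fourth derivative of `f ∘ f` at `0`. Faà di Bruno's formula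
to order four expresses it through `f'(0), …, f⁗(0)`; with `f(0) = 0` and `f'(0) = -1` the
two terms containing `f⁗(0)` cancel, leaving `3 f''(0)³ + 2 f''(0) f'''(0) = 24 (a₂³ + a₂ a₃)`.
-/

open Filter Topology

section
variable {𝕜 F : Type*} [NontriviallyNormedField 𝕜] [NormedAddCommGroup F] [NormedSpace 𝕜 F]
  {f : 𝕜 → F} {x : 𝕜}

theorem ContDiffAt.iteratedDeriv_right {n m k : ℕ} (hf : ContDiffAt 𝕜 n f x)
    (hkm : k + m ≤ n) :
    ContDiffAt 𝕜 m (iteratedDeriv k f) x := by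
  induction k generalizing f n with
  | zero => simpa using hf.of_le (by exact_mod_cast (zero_add m) ▸ hkm)
  | succ k ih =>
    rw [iteratedDeriv_succ']
    exact ih (n := n - 1) (hf.derivWithin (by norm_cast; omega)) (by omega)

theorem ContDiffAt.hasDerivAt_iteratedDeriv {n k : ℕ} (hf : ContDiffAt 𝕜 n f x) (hk : k < n) :
    HasDerivAt (iteratedDeriv k f) (iteratedDeriv (k + 1) f x) x := by
  rw [iteratedDeriv_succ]
  exact ((hf.iteratedDeriv_right (m := 1) hk).differentiableAt one_ne_zero).hasDerivAt

end

theorem iteratedDeriv_comp_four {𝕜 : Type*} [NontriviallyNormedField 𝕜] {g f : 𝕜 → 𝕜} {x : 𝕜}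
    (hg : ContDiffAt 𝕜 4 g (f x)) (hf : ContDiffAt 𝕜 4 f x) :
    iteratedDeriv 4 (g ∘ f) x =
      iteratedDeriv 4 g (f x) * deriv f x ^ 4 +
      6 * iteratedDeriv 3 g (f x) * iteratedDeriv 2 f x * deriv f x ^ 2 +
      iteratedDeriv 2 g (f x) *
        (3 * iteratedDeriv 2 f x ^ 2 + 4 * deriv f x * iteratedDeriv 3 f x) +
      deriv g (f x) * iteratedDeriv 4 f x := by
  have hthree : iteratedDeriv 3 (g ∘ f) =ᶠ[𝓝 x] fun y ↦
      iteratedDeriv 3 g (f y) * iteratedDeriv 1 f y ^ 3 +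
      3 * iteratedDeriv 2 g (f y) * iteratedDeriv 2 f y * iteratedDeriv 1 f y +
      iteratedDeriv 1 g (f y) * iteratedDeriv 3 f y := by
    filter_upwards [hf.eventually (by simp),
      hf.continuousAt.eventually (hg.eventually (by simp))] with y hfy hgy
    simpa only [iteratedDeriv_one] using
      iteratedDeriv_comp_three (hgy.of_le (by norm_num)) (hfy.of_le (by norm_num))
  have df (k : ℕ) (hk : k < 4) := hf.hasDerivAt_iteratedDeriv (n := 4) hk
  have dg (k : ℕ) (hk : k < 4) := (hg.hasDerivAt_iteratedDeriv (n := 4) hk).comp x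
    ((hf.differentiableAt (by simp)).hasDerivAt)
  have hthree_deriv := (((dg 3 (by simp)).mul ((df 1 (by simp)).pow 3)).add
    ((((dg 2 (by simp)).const_mul 3).mul (df 2 (by simp))).mul (df 1 (by simp)))).add
    ((dg 1 (by simp)).mul (df 3 (by simp)))
  rw [iteratedDeriv_succ, hthree.deriv_eq]
  refine hthree_deriv.deriv.trans ?_
  simp only [iteratedDeriv_one, Pi.mul_apply, Pi.pow_apply, Function.comp_apply]
  ring

theorem stmt14 (f : ℝ → ℝ) (a2 a3 : ℝ) (hf : AnalyticAt ℝ f 0) (h0 : f 0 = 0)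
    (h1 : deriv f 0 = -1)
    (h2 : iteratedDeriv 2 f 0 / 2 = a2) (h3 : iteratedDeriv 3 f 0 / 6 = a3) :
    iteratedDeriv 4 (f ∘ f) 0 / 24 = a2 ^ 3 + a2 * a3 ∧
    iteratedDeriv 4 (f ∘ f) 0 / 24 = -(a2 / 2) * (-2 * a2 ^ 2 - 2 * a3) := by
  have hf4 : ContDiffAt ℝ 4 f 0 := hf.contDiffAt
  have hfaa_di_bruno := iteratedDeriv_comp_four (h0 ▸ hf4) hf4
  rw [h0, h1] at hfaa_di_bruno
  subst a2 a3
  rw [hfaa_di_bruno]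
  constructor <;> ring
end
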